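/- Let f(x,t) be a smooth positive solution of the normalised Fokker-Planck equation ∂_t f = div(f_∞ C ∇(f/f_∞)) on ℝ^d, where C is a constant matrix and f_∞ the standard Gaussian. Define J(x,t) := f_∞(x) ∇(f(x,t)/f_∞(x)). Then J satisfies the evolution equation ∂_t J = (∇ + x)(div(C J)), i.e., component-wise ∂_t J_i = ∂_{x_i}(div(C J)) + x_i div(C J). -/

import Mathlib

open MeasureTheory ContDiff

noncomputable def pd (d : ℕ) (j : Fin d) (f : (Fin d → ℝ) → ℝ) : (Fin d → ℝ) → ℝ :=
  fun x => fderiv ℝ f x (Pi.single j 1)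

noncomputable def pdMulti {d : ℕ} (α : Fin d → ℕ) (f : (Fin d → ℝ) → ℝ) : (Fin d → ℝ) → ℝ :=
  (List.finRange d).foldr (fun j g => (pd d j)^[α j] g) f

/-- The standard Gaussian density on ℝ^d. -/
noncomputable def gaussian (d : ℕ) (x : Fin d → ℝ) : ℝ :=
  (2 * Real.pi) ^ (-(d : ℝ) / 2) * Real.exp (-(∑ i, x i ^ 2) / 2)

/-- Hermite functions `h_α = (-1)^{|α|} ∂^α f_∞`. -/
noncomputable def hermiteFun {d : ℕ} (α : Fin d → ℕ) (x : Fin d → ℝ) : ℝ :=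
  (-1 : ℝ) ^ (∑ i, α i) * pdMulti α (gaussian d) x


section Aux

lemma pd_slice {d : ℕ} {G : ℝ × (Fin d → ℝ) → ℝ}
    (hG : Differentiable ℝ G) (s : ℝ) (x : Fin d → ℝ) (i : Fin d) :
    pd d i (fun y => G (s, y)) x = fderiv ℝ G (s, x) (0, Pi.single i 1) := by
  have h : HasFDerivAt (fun y => G (s, y))
      ((fderiv ℝ G (s, x)).comp (ContinuousLinearMap.inr ℝ ℝ (Fin d → ℝ))) x :=
    (hG (s, x)).hasFDerivAt.comp x (hasFDerivAt_prodMk_right s x)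
  simp [pd, h.fderiv]

lemma hasDerivAt_slice {d : ℕ} {G : ℝ × (Fin d → ℝ) → ℝ}
    (hG : Differentiable ℝ G) (t : ℝ) (y : Fin d → ℝ) :
    HasDerivAt (fun s => G (s, y)) (fderiv ℝ G (t, y) (1, 0)) t := by
  have h := (hG (t, y)).hasFDerivAt.comp t (hasFDerivAt_prodMk_left (𝕜 := ℝ) t y)
  simpa [Function.comp_def] using h.hasDerivAt

lemma swap_deriv_pd {d : ℕ} {G : ℝ × (Fin d → ℝ) → ℝ}
    (hG : ContDiff ℝ ∞ G) (t : ℝ) (x : Fin d → ℝ) (i : Fin d) :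
    HasDerivAt (fun s => pd d i (fun y => G (s, y)) x)
      (pd d i (fun y => deriv (fun s => G (s, y)) t) x) t := by
  have hGd : Differentiable ℝ G := hG.differentiable (by simp)
  have hG2 : ContDiff ℝ ∞ (fderiv ℝ G) := hG.fderiv_right (by simp)
  have hG2d : Differentiable ℝ (fderiv ℝ G) := hG2.differentiable (by simp)
  set v : ℝ × (Fin d → ℝ) := (0, Pi.single i 1) with hv
  -- LHS function equals s ↦ fderiv G (s,x) v
  have hL : (fun s => pd d i (fun y => G (s, y)) x) = fun s => fderiv ℝ G (s, x) v := by
    funext s; exact pd_slice hGd s x i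
  -- derivative of that at t
  have h1 : HasFDerivAt (fun p : ℝ × (Fin d → ℝ) => fderiv ℝ G p v)
      ((fderiv ℝ (fderiv ℝ G) (t, x)).flip v) (t, x) := by
    have := ((hG2d (t, x)).hasFDerivAt).clm_apply (hasFDerivAt_const v (t, x))
    simpa using this
  have h2 : HasDerivAt (fun s => fderiv ℝ G (s, x) v)
      (fderiv ℝ (fderiv ℝ G) (t, x) (1, 0) v) t := by
    have h := h1.comp t (hasFDerivAt_prodMk_left (𝕜 := ℝ) t x)
    simpa [Function.comp_def] using h.hasDerivAt
  rw [hL]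
  convert h2 using 1
  -- RHS: pd of the t-derivative
  have hR : (fun y => deriv (fun s => G (s, y)) t) = fun y => fderiv ℝ G (t, y) (1, 0) := by
    funext y; exact (hasDerivAt_slice hGd t y).deriv
  rw [hR]
  have h3 : HasFDerivAt (fun y => fderiv ℝ G (t, y) (1, 0))
      (((fderiv ℝ (fderiv ℝ G) (t, x)).flip ((1:ℝ), (0 : Fin d → ℝ))).comp
        (ContinuousLinearMap.inr ℝ ℝ (Fin d → ℝ))) x := by
    have h4 : HasFDerivAt (fun p : ℝ × (Fin d → ℝ) => fderiv ℝ G p ((1:ℝ), (0 : Fin d → ℝ)))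
        ((fderiv ℝ (fderiv ℝ G) (t, x)).flip ((1:ℝ), (0 : Fin d → ℝ))) (t, x) := by
      have := ((hG2d (t, x)).hasFDerivAt).clm_apply
        (hasFDerivAt_const ((1:ℝ), (0 : Fin d → ℝ)) (t, x))
      simpa using this
    exact h4.comp x (hasFDerivAt_prodMk_right t x)
  have hsymm := (hG.contDiffAt (x := (t, x))).isSymmSndFDerivAt (by rw [minSmoothness_of_isRCLikeNormedField]; exact WithTop.coe_le_coe.2 le_top)
  simp only [pd, h3.fderiv]
  exact hsymm _ _

lemma gaussian_pos (d : ℕ) (x : Fin d → ℝ) : 0 < gaussian d x :=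
  mul_pos (Real.rpow_pos_of_pos (by positivity) _) (Real.exp_pos _)

lemma contDiff_gaussian (d : ℕ) : ContDiff ℝ ∞ (gaussian d) := by
  apply contDiff_const.mul
  apply Real.contDiff_exp.comp
  exact ((ContDiff.sum fun j _ => (contDiff_apply ℝ ℝ j).pow 2).neg).div_const 2

lemma hasFDerivAt_sumsq (d : ℕ) (x : Fin d → ℝ) :
    HasFDerivAt (fun x : Fin d → ℝ => ∑ j, x j ^ 2)
      (∑ j, (2 * x j) • (ContinuousLinearMap.proj j : (Fin d → ℝ) →L[ℝ] ℝ)) x := by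
  apply HasFDerivAt.fun_sum
  intro j _
  have hp := (ContinuousLinearMap.proj (R := ℝ) (φ := fun _ : Fin d => ℝ) j).hasFDerivAt (x := x)
  have := hp.fun_mul hp
  have h2 : (fun y : Fin d → ℝ => y j ^ 2) = fun y => y j * y j := by
    funext y; ring
  rw [h2]
  refine HasFDerivAt.congr_fderiv this ?_
  ext w
  simp [two_mul]
  ring

lemma gaussian_hasFDerivAt (d : ℕ) (x : Fin d → ℝ) :
    HasFDerivAt (gaussian d)
      ((-(gaussian d x) / 2) • ∑ j, (2 * x j) • (ContinuousLinearMap.proj j : (Fin d → ℝ) →L[ℝ] ℝ)) x := by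
  have h0 : (fun x : Fin d → ℝ => -(∑ j, x j ^ 2) / 2) = fun x => (-(2⁻¹ : ℝ)) * ∑ j, x j ^ 2 := by
    funext x; ring
  have hq : HasFDerivAt (fun x : Fin d → ℝ => -(∑ j, x j ^ 2) / 2)
      ((-(2⁻¹ : ℝ)) • ∑ j, (2 * x j) • (ContinuousLinearMap.proj j : (Fin d → ℝ) →L[ℝ] ℝ)) x := by
    rw [h0]; exact (hasFDerivAt_sumsq d x).const_mul _
  have h1 := (hq.exp).const_mul ((2 * Real.pi) ^ (-(d : ℝ) / 2))
  refine HasFDerivAt.congr_fderiv h1 ?_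
  ext w
  simp [gaussian]
  ring

lemma pd_gaussian (d : ℕ) (i : Fin d) (x : Fin d → ℝ) :
    pd d i (gaussian d) x = -(x i) * gaussian d x := by
  rw [pd, (gaussian_hasFDerivAt d x).fderiv]
  simp [Pi.single_apply, mul_ite, Finset.sum_ite_eq']
  ring

lemma contDiff_pd {d : ℕ} {h : (Fin d → ℝ) → ℝ} (hh : ContDiff ℝ ∞ h) (j : Fin d) :
    ContDiff ℝ ∞ (pd d j h) :=
  (hh.fderiv_right (by simp)).clm_apply contDiff_const

end Aux

/-- The flux `J = f_∞ ∇(f/f_∞)` of a solution of the normalised Fokker-Planck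
equation satisfies `∂_t J = (∇ + x)(div(C J))`. -/
theorem flux_evolution (d : ℕ) (C : Matrix (Fin d) (Fin d) ℝ)
    (f : ℝ → (Fin d → ℝ) → ℝ)
    (hf_pos : ∀ t x, 0 < f t x)
    (hf_smooth : ContDiff ℝ (⊤ : ℕ∞) (fun p : ℝ × (Fin d → ℝ) => f p.1 p.2))
    (hFP : ∀ t : ℝ, ∀ x : Fin d → ℝ,
      deriv (fun s => f s x) t =
        ∑ i, pd d i (fun y => gaussian d y *
          ∑ l, C i l * pd d l (fun z => f t z / gaussian d z) y) x)
    (J : ℝ → (Fin d → ℝ) → Fin d → ℝ)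
    (hJ : ∀ t x i, J t x i = gaussian d x * pd d i (fun y => f t y / gaussian d y) x) :
    ∀ t : ℝ, ∀ x : Fin d → ℝ, ∀ i : Fin d,
      deriv (fun s => J s x i) t =
        pd d i (fun y => ∑ j, pd d j (fun z => ∑ l, C j l * J t z l) y) x +
          x i * ∑ j, pd d j (fun z => ∑ l, C j l * J t z l) x := by
  intro t x i
  set u : (Fin d → ℝ) → ℝ := gaussian d with hu
  have hune : ∀ y, u y ≠ 0 := fun y => (gaussian_pos d y).ne'
  set g : ℝ × (Fin d → ℝ) → ℝ := fun p => f p.1 p.2 / u p.2 with hgdef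
  have hg : ContDiff ℝ ∞ g :=
    (hf_smooth.of_le (by simp)).div ((contDiff_gaussian d).comp contDiff_snd)
      (fun p => hune p.2)
  -- the inner functions in hFP coincide with C·J
  have hinner : ∀ s : ℝ, ∀ j : Fin d,
      (fun y => gaussian d y * ∑ l, C j l * pd d l (fun z => f s z / gaussian d z) y) =
      (fun z => ∑ l, C j l * J s z l) := by
    intro s j
    funext y
    rw [Finset.mul_sum]
    refine Finset.sum_congr rfl fun l _ => ?_
    rw [hJ]
    ring
  -- hFP rewritten
  have hFP' : ∀ s : ℝ, ∀ y : Fin d → ℝ,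
      deriv (fun s' => f s' y) s = ∑ j, pd d j (fun z => ∑ l, C j l * J s z l) y := by
    intro s y
    rw [hFP s y]
    exact Finset.sum_congr rfl fun j _ => by rw [hinner s j]
  set D : (Fin d → ℝ) → ℝ := fun y => ∑ j, pd d j (fun z => ∑ l, C j l * J t z l) y with hDdef
  -- smoothness of D
  have hft : ∀ s : ℝ, ContDiff ℝ ∞ (fun y => f s y / u y) :=
    fun s => hg.comp (contDiff_const.prodMk contDiff_id)
  have hDsm : ContDiff ℝ ∞ D := by
    rw [hDdef]
    apply ContDiff.sum
    intro j _
    have : (fun z => ∑ l, C j l * J t z l) =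
        (fun z => ∑ l, C j l * (u z * pd d l (fun y => f t y / u y) z)) := by
      funext z; exact Finset.sum_congr rfl fun l _ => by rw [hJ]
    rw [this]
    exact contDiff_pd (ContDiff.sum fun l _ =>
      contDiff_const.mul ((contDiff_gaussian d).mul (contDiff_pd (hft t) l))) j
  -- time derivative of J via the swap lemma
  have hJs : (fun s => J s x i) = fun s => u x * pd d i (fun y => g (s, y)) x := by
    funext s; rw [hJ]
  have hD1 : deriv (fun s => J s x i) t
      = u x * pd d i (fun y => deriv (fun s => g (s, y)) t) x := by
    rw [hJs]
    exact (((swap_deriv_pd hg t x i)).const_mul (u x)).deriv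
  -- identify the time derivative of g
  have hgt : (fun y => deriv (fun s => g (s, y)) t) = fun y => D y / u y := by
    funext y
    have : (fun s => g (s, y)) = fun s => f s y / u y := rfl
    rw [this, deriv_div_const, hFP' t y]
  rw [hD1, hgt]
  -- product rule: D = (D/u) * u
  have hDquot : DifferentiableAt ℝ (fun y => D y / u y) x :=
    ((hDsm.div (contDiff_gaussian d) hune).differentiable (by simp)).differentiableAt
  have hudiff : DifferentiableAt ℝ u x :=
    ((contDiff_gaussian d).differentiable (by simp)).differentiableAt
  have hprod : (fun y => D y) = fun y => (D y / u y) * u y := by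
    funext y; exact (div_mul_cancel₀ _ (hune y)).symm
  have hpdD : pd d i D x = -(x i) * D x + u x * pd d i (fun y => D y / u y) x := by
    have e1 : pd d i D x = fderiv ℝ (fun y => (D y / u y) * u y) x (Pi.single i 1) := by
      rw [pd]; congr 1; exact congrArg (fderiv ℝ · x) hprod
    rw [e1, fderiv_fun_mul hDquot hudiff]
    have e2 : fderiv ℝ u x (Pi.single i 1) = -(x i) * u x := pd_gaussian d i x
    simp only [ContinuousLinearMap.add_apply, ContinuousLinearMap.smul_apply, smul_eq_mul, e2]
    have : fderiv ℝ (fun y => D y / u y) x (Pi.single i 1) = pd d i (fun y => D y / u y) x := rfl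
    rw [this]
    have h5 : D x / u x * (-x i * u x) = -x i * D x := by
      have hx := hune x
      field_simp
    rw [h5]
  have : u x * pd d i (fun y => D y / u y) x = pd d i D x + x i * D x := by
    rw [hpdD]; ring
  rw [this, hDdef]
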